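/- arXiv:2010.07577 — 7 statements merged into one kernel-verified Lean document; each statement's English description precedes it below -/
import Mathlib

section
/- Let M be a finite set of cells, K ∈ M a fixed cell with volume |K| > 0 and finite face set E(K); each face σ ∈ E(K) carries an area |σ| > 0, a normal velocity u_{K,σ} ∈ ℝ, and an upwind cell M_σ ∈ M with M_σ = K whenever u_{K,σ} > 0. Let δt > 0 and let ρ^m, (h_s)^m, p^m, (e_s)^m : M → ℝ for m = n, n+1 satisfy the cellwise relation ρ^m_L (h_s)^m_L = ρ^m_L (e_s)^m_L + p^m_L for every cell L and m = n, n+1. Set the upwind face values ρ_σ = ρ^{n+1}_{M_σ}, (h_s)_σ = (h_s)^{n+1}_{M_σ}, p_σ = p^{n+1}_{M_σ}, (e_s)_σ = (e_s)^{n+1}_{M_σ} and the mass fluxes F_{K,σ} = |σ| ρ_σ u_{K,σ}. Assume the discrete sensible enthalpy balance (|K|/δt)(ρ^{n+1}_K (h_s)^{n+1}_K − ρ^n_K (h_s)^n_K) + Σ_{σ∈E(K)} F_{K,σ} (h_s)_σ − (|K|/δt)(p^{n+1}_K − p^n_K) + Σ_{σ∈E(K)} |σ| u_{K,σ} (p^{n+1}_K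 − p_σ) = |K| ((ω̇_θ)_K + S_K) for given reals (ω̇_θ)_K, S_K. Then the discrete sensible internal energy balance holds: (|K|/δt)(ρ^{n+1}_K (e_s)^{n+1}_K − ρ^n_K (e_s)^n_K) + Σ_{σ∈E(K)} F_{K,σ} (e_s)_σ + p^{n+1}_K Σ_{σ∈E(K)} |σ| u_{K,σ} = |K| ((ω̇_θ)_K + S_K). -/
/-- for a fixed cell `K`, the discrete sensible enthalpy balance together
with the cellwise relation `ρ h_s = ρ e_s + p` (and upwind face values) imply the
discrete sensible internal energy balance. -/
theorem discrete_internal_energy_from_enthalpy {M F : Type*} (K : M)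
    (volK : ℝ) (hvolK : 0 < volK)
    (E : Finset F) (area : F → ℝ) (harea : ∀ σ ∈ E, 0 < area σ)
    (uvel : F → ℝ) (Mup : F → M)
    (hupwind : ∀ σ ∈ E, 0 < uvel σ → Mup σ = K)
    (δt : ℝ) (hδt : 0 < δt)
    (ρn ρn1 hsn hsn1 pn pn1 esn esn1 : M → ℝ)
    (hstate : ∀ L : M,
      ρn L * hsn L = ρn L * esn L + pn L ∧ ρn1 L * hsn1 L = ρn1 L * esn1 L + pn1 L)
    (ωθK SK : ℝ)
    (hbal :
      (volK / δt) * (ρn1 K * hsn1 K - ρn K * hsn K)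
        + ∑ σ ∈ E, (area σ * ρn1 (Mup σ) * uvel σ) * hsn1 (Mup σ)
        - (volK / δt) * (pn1 K - pn K)
        + ∑ σ ∈ E, area σ * uvel σ * (pn1 K - pn1 (Mup σ))
        = volK * (ωθK + SK)) :
    (volK / δt) * (ρn1 K * esn1 K - ρn K * esn K)
      + ∑ σ ∈ E, (area σ * ρn1 (Mup σ) * uvel σ) * esn1 (Mup σ)
      + pn1 K * ∑ σ ∈ E, area σ * uvel σ
      = volK * (ωθK + SK) := by
  have hK := hstate K
  have hsum : ∑ σ ∈ E, (area σ * ρn1 (Mup σ) * uvel σ) * hsn1 (Mup σ)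
      = ∑ σ ∈ E, ((area σ * ρn1 (Mup σ) * uvel σ) * esn1 (Mup σ)
        + area σ * uvel σ * pn1 (Mup σ)) := by
    refine Finset.sum_congr rfl fun σ _ => ?_
    have h := (hstate (Mup σ)).2
    linear_combination (area σ * uvel σ) * h
  rw [hsum, Finset.sum_add_distrib] at hbal
  have hp : ∑ σ ∈ E, area σ * uvel σ * (pn1 K - pn1 (Mup σ))
      = ∑ σ ∈ E, (pn1 K * (area σ * uvel σ) - area σ * uvel σ * pn1 (Mup σ)) :=
    Finset.sum_congr rfl fun σ _ => by ring
  rw [hp, Finset.sum_sub_distrib] at hbal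
  rw [Finset.mul_sum]
  have h1 := hK.1
  have h2 := hK.2
  linear_combination hbal - (volK / δt) * h2 + (volK / δt) * h1
end

section
/- In the setting of the discrete sensible internal energy balance (fixed cell K with volume |K| > 0, faces σ ∈ E(K) with areas |σ| > 0, normal velocities u_{K,σ}, upwind mass fluxes F_{K,σ} = |σ| ρ_σ u_{K,σ}, upwind face values of e_s at level n+1, and the balance (|K|/δt)(ρ^{n+1}_K (e_s)^{n+1}_K − ρ^n_K (e_s)^n_K) + Σ_σ F_{K,σ} (e_s)_σ + p^{n+1}_K Σ_σ |σ| u_{K,σ} = |K| ((ω̇_θ)_K + S_K)), suppose additionally: a finite index set I with real constants (Δh_i)_{i∈I}; previous-level densities ρ^{n−1} : M → ℝ; species fluxes F^n_{K,σ} ∈ ℝ with a common upwind cell U(K,σ), species values (y_i)^n, (y_i)^{n+1} : M → ℝ and reaction rates (ω̇_i)_K satisfying, for each i ∈ I, (|K|/δt)(ρ^n_K (y_i)^{n+1}_K − ρ^{n−1}_K (y_i)^n_K) + Σ_σ F^n_{K,σ} (y_i)^{n+1}_{U(K,σ)} = |K| (ω̇_i)_K, together with Σ_{i∈I} Δh_i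 (ω̇_i)_K = −(ω̇_θ)_K. Then, setting (ρe)^m_K = ρ^m_K (e_s)^m_K + ρ^{m−1}_K Σ_{i∈I} Δh_i (y_i)^m_K for m = n, n+1, the discrete total internal energy balance holds: (|K|/δt)((ρe)^{n+1}_K − (ρe)^n_K) + Σ_σ F_{K,σ} (e_s)_σ + Σ_σ F^n_{K,σ} Σ_{i∈I} Δh_i (y_i)^{n+1}_{U(K,σ)} + p^{n+1}_K Σ_σ |σ| u_{K,σ} = |K| S_K. -/
/-- for a fixed cell `K`, the discrete sensible internal energy balance
together with the discrete species balances (weighted by the formation enthalpies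
`Δhᵢ`, with `Σᵢ Δhᵢ (ω̇ᵢ)_K = -(ω̇_θ)_K`) imply the discrete total internal energy
balance, where the total internal energy per cell is
`(ρe)ᵐ_K = ρᵐ_K (e_s)ᵐ_K + ρ^{m-1}_K Σᵢ Δhᵢ (yᵢ)ᵐ_K`. -/
theorem discrete_total_internal_energy_balance {M F : Type*} {I : Type*} [Fintype I]
    (K : M) (volK : ℝ) (hvolK : 0 < volK)
    (E : Finset F) (area : F → ℝ) (harea : ∀ σ ∈ E, 0 < area σ)
    (uvel : F → ℝ) (Mup : F → M)
    (hupwind : ∀ σ ∈ E, 0 < uvel σ → Mup σ = K)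
    (δt : ℝ) (hδt : 0 < δt)
    (ρnm1 ρn ρn1 esn esn1 : M → ℝ) (pn1K : ℝ)
    (ωθK SK : ℝ)
    (hes_bal :
      (volK / δt) * (ρn1 K * esn1 K - ρn K * esn K)
        + ∑ σ ∈ E, (area σ * ρn1 (Mup σ) * uvel σ) * esn1 (Mup σ)
        + pn1K * ∑ σ ∈ E, area σ * uvel σ
        = volK * (ωθK + SK))
    (Δh : I → ℝ) (Fn : F → ℝ) (U : F → M)
    (yn yn1 : I → M → ℝ) (ωi : I → ℝ)
    (hspecies : ∀ i : I,
      (volK / δt) * (ρn K * yn1 i K - ρnm1 K * yn i K)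
        + ∑ σ ∈ E, Fn σ * yn1 i (U σ) = volK * ωi i)
    (hheat : ∑ i : I, Δh i * ωi i = -ωθK) :
    (volK / δt) *
        ((ρn1 K * esn1 K + ρn K * ∑ i : I, Δh i * yn1 i K)
          - (ρn K * esn K + ρnm1 K * ∑ i : I, Δh i * yn i K))
      + ∑ σ ∈ E, (area σ * ρn1 (Mup σ) * uvel σ) * esn1 (Mup σ)
      + ∑ σ ∈ E, Fn σ * ∑ i : I, Δh i * yn1 i (U σ)
      + pn1K * ∑ σ ∈ E, area σ * uvel σ
      = volK * SK := by
  have h2 : ∑ i : I, Δh i *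
      ((volK / δt) * (ρn K * yn1 i K - ρnm1 K * yn i K)
        + ∑ σ ∈ E, Fn σ * yn1 i (U σ))
      = ∑ i : I, Δh i * (volK * ωi i) :=
    Finset.sum_congr rfl fun i _ => by rw [hspecies i]
  have hA : ∑ i : I, Δh i * ∑ σ ∈ E, Fn σ * yn1 i (U σ)
      = ∑ σ ∈ E, Fn σ * ∑ i : I, Δh i * yn1 i (U σ) := by
    simp only [Finset.mul_sum]
    rw [Finset.sum_comm]
    exact Finset.sum_congr rfl fun σ _ => Finset.sum_congr rfl fun i _ => by ring
  have h2' : (volK / δt) * (ρn K * ∑ i : I, Δh i * yn1 i K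
        - ρnm1 K * ∑ i : I, Δh i * yn i K)
      + ∑ σ ∈ E, Fn σ * ∑ i : I, Δh i * yn1 i (U σ)
      = volK * (-ωθK) := by
    have hh : ∑ i : I, Δh i * (volK * ωi i) = volK * -ωθK := by
      rw [← hheat, Finset.mul_sum]; exact Finset.sum_congr rfl fun i _ => by ring
    rw [← hh, ← h2]
    simp only [mul_add, Finset.sum_add_distrib]
    congr 1
    · rw [mul_sub, Finset.mul_sum, Finset.mul_sum, Finset.mul_sum, Finset.mul_sum,
        ← Finset.sum_sub_distrib]
      exact Finset.sum_congr rfl fun i _ => by ring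
    · exact hA.symm
  linarith [hes_bal, h2']
end

section
/- Fix δt > 0 and a face σ with dual-cell volume |D_σ| > 0, densities ρ^{n−1} > 0 and ρ^n > 0, velocity values u^n, ũ, u^{n+1} ∈ ℝ (previous, predicted and corrected velocities), pressure-gradient values g^n, g^{n+1} ∈ ℝ, and the scaled gradient g̃ = (ρ^n/ρ^{n−1})^{1/2} g^n. Let Ẽ be a finite set of dual faces; each ε ∈ Ẽ carries a mass flux F_ε ∈ ℝ and a neighbour predicted velocity ũ'_ε ∈ ℝ, and set the centered face value ũ_ε = (ũ + ũ'_ε)/2. Assume: (dual mass balance) (|D_σ|/δt)(ρ^n − ρ^{n−1}) + Σ_{ε∈Ẽ} F_ε = 0; (prediction step) (|D_σ|/δt)(ρ^n ũ − ρ^{n−1} u^n) + Σ_{ε∈Ẽ} F_ε ũ_ε + |D_σ| g̃ = 0; (correction step) (1/δt) ρ^n (u^{n+1} − ũ) + g^{n+1} − g̃ = 0. Then the discrete kinetic energy balance holds: (|D_σ|/δt)(e_k^{n+1} − e_k^n) + Σ_{ε∈Ẽ} F_ε e_{k,ε} + |D_σ| g^{n+1} u^{n+1} = −R, where e_k^{n+1}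 = (1/2) ρ^n (u^{n+1})² + (δt²/(2ρ^n)) (g^{n+1})², e_k^n = (1/2) ρ^{n−1} (u^n)² + (δt²/(2ρ^{n−1})) (g^n)², e_{k,ε} = (1/2) ũ ũ'_ε, and R = (|D_σ| ρ^{n−1}/(2δt)) (ũ − u^n)². -/
/-!
Multiplying the prediction step by `ũ` and subtracting `ũ²/2` times the dual mass balance
yields a kinetic energy identity for `ũ` whose remainder is the dissipation `R`; the
centered face values make the convective part collapse to `F_ε ũ ũ'_ε / 2`. The correction
step says `ρⁿ u^{n+1}/δt + g^{n+1} = ρⁿ ũ/δt + g̃`; squaring it and multiplying by `δt/(2ρⁿ)`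
turns the pressure work into the gradient part of the energy. Finally the scaling of `g̃`
is chosen exactly so that `(g̃)²/ρⁿ = (gⁿ)²/ρⁿ⁻¹`.
-/

section

open Finset

variable {K : Type*} [Field K]

def kineticEnergy (ρ δt u g : K) : K :=
  1 / 2 * ρ * u ^ 2 + δt ^ 2 / (2 * ρ) * g ^ 2

theorem mul_sum_centered_sub_sq_mul_sum {ι : Type*} (s : Finset ι) (F v : ι → K) (u : K) :
    u * ∑ ε ∈ s, F ε * ((u + v ε) / 2) - u ^ 2 / 2 * ∑ ε ∈ s, F ε
      = ∑ ε ∈ s, F ε * (1 / 2 * u * v ε) := by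
  rw [mul_sum, mul_sum, ← sum_sub_distrib]
  exact sum_congr rfl fun ε _ => by ring

theorem kinetic_energy_prediction [CharZero K] {ι : Type*} (s : Finset ι) (F v : ι → K)
    (δt V ρ₀ ρ₁ u₀ ũ G : K)
    (hmass : V / δt * (ρ₁ - ρ₀) + ∑ ε ∈ s, F ε = 0)
    (hpred : V / δt * (ρ₁ * ũ - ρ₀ * u₀) + ∑ ε ∈ s, F ε * ((ũ + v ε) / 2) + V * G = 0) :
    V / δt * (1 / 2 * ρ₁ * ũ ^ 2 - 1 / 2 * ρ₀ * u₀ ^ 2)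
        + ∑ ε ∈ s, F ε * (1 / 2 * ũ * v ε) + V * G * ũ
      = -(V * ρ₀ / (2 * δt) * (ũ - u₀) ^ 2) := by
  linear_combination ũ * hpred - ũ ^ 2 / 2 * hmass
    - mul_sum_centered_sub_sq_mul_sum s F v ũ

theorem kinetic_energy_correction [CharZero K] {δt ρ u₁ ũ g₁ G : K} (hδt : δt ≠ 0) (hρ : ρ ≠ 0)
    (hcorr : 1 / δt * ρ * (u₁ - ũ) + g₁ - G = 0) :
    1 / δt * (kineticEnergy ρ δt u₁ g₁ - kineticEnergy ρ δt ũ G) + g₁ * u₁ = G * ũ := by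
  have hcorr' : ρ * u₁ + δt * g₁ = ρ * ũ + δt * G := by
    field_simp at hcorr
    linear_combination hcorr
  unfold kineticEnergy
  field_simp
  -- the energy difference is `(X² - Y²)/(2ρδt)` for the two sides `X = Y` of `hcorr'`
  linear_combination (ρ * u₁ + δt * g₁ + ρ * ũ + δt * G) * hcorr'

end

theorem gradient_energy_sqrt_scaling {ρ₀ ρ₁ : ℝ} (hρ₀ : 0 < ρ₀) (hρ₁ : 0 < ρ₁) (δt g : ℝ) :
    δt ^ 2 / (2 * ρ₁) * (Real.sqrt (ρ₁ / ρ₀) * g) ^ 2 = δt ^ 2 / (2 * ρ₀) * g ^ 2 := by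
  rw [mul_pow, Real.sq_sqrt (by positivity)]
  field_simp

theorem discrete_kinetic_energy_balance_general {D : Type*}
    (δt Dvol ρnm1 ρn : ℝ) (hδt : 0 < δt)
    (hρnm1 : 0 < ρnm1) (hρn : 0 < ρn)
    (un ut un1 gn gn1 : ℝ)
    (Ed : Finset D) (Fε : D → ℝ) (utn : D → ℝ)
    (hdualmass : (Dvol / δt) * (ρn - ρnm1) + ∑ ε ∈ Ed, Fε ε = 0)
    (hpred : (Dvol / δt) * (ρn * ut - ρnm1 * un)
        + ∑ ε ∈ Ed, Fε ε * ((ut + utn ε) / 2)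
        + Dvol * (Real.sqrt (ρn / ρnm1) * gn) = 0)
    (hcorr : (1 / δt) * ρn * (un1 - ut) + gn1 - Real.sqrt (ρn / ρnm1) * gn = 0) :
    (Dvol / δt) *
        (((1/2) * ρn * un1 ^ 2 + (δt ^ 2 / (2 * ρn)) * gn1 ^ 2)
          - ((1/2) * ρnm1 * un ^ 2 + (δt ^ 2 / (2 * ρnm1)) * gn ^ 2))
      + ∑ ε ∈ Ed, Fε ε * ((1/2) * ut * utn ε)
      + Dvol * gn1 * un1
      = -((Dvol * ρnm1 / (2 * δt)) * (ut - un) ^ 2) := by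
  have prediction := kinetic_energy_prediction Ed Fε utn δt Dvol ρnm1 ρn un ut _ hdualmass hpred
  have correction := kinetic_energy_correction hδt.ne' hρn.ne' hcorr
  have scaling := gradient_energy_sqrt_scaling hρnm1 hρn δt gn
  unfold kineticEnergy at correction
  linear_combination prediction + Dvol * correction + Dvol / δt * scaling

/-- at a single velocity degree of freedom of the staggered
pressure-correction scheme (dual mass balance, prediction step with scaled pressure
gradient `g̃ = (ρⁿ/ρⁿ⁻¹)^{1/2} gⁿ` and centered convection face values, correction
step), the discrete kinetic energy balance holds with numerical dissipation
`R = (|D_σ| ρⁿ⁻¹/(2δt)) (ũ - uⁿ)²`. -/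
theorem discrete_kinetic_energy_balance {D : Type*}
    (δt Dvol ρnm1 ρn : ℝ) (hδt : 0 < δt) (hDvol : 0 < Dvol)
    (hρnm1 : 0 < ρnm1) (hρn : 0 < ρn)
    (un ut un1 gn gn1 : ℝ)
    (Ed : Finset D) (Fε : D → ℝ) (utn : D → ℝ)
    (hdualmass : (Dvol / δt) * (ρn - ρnm1) + ∑ ε ∈ Ed, Fε ε = 0)
    (hpred : (Dvol / δt) * (ρn * ut - ρnm1 * un)
        + ∑ ε ∈ Ed, Fε ε * ((ut + utn ε) / 2)
        + Dvol * (Real.sqrt (ρn / ρnm1) * gn) = 0)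
    (hcorr : (1 / δt) * ρn * (un1 - ut) + gn1 - Real.sqrt (ρn / ρnm1) * gn = 0) :
    (Dvol / δt) *
        (((1/2) * ρn * un1 ^ 2 + (δt ^ 2 / (2 * ρn)) * gn1 ^ 2)
          - ((1/2) * ρnm1 * un ^ 2 + (δt ^ 2 / (2 * ρnm1)) * gn ^ 2))
      + ∑ ε ∈ Ed, Fε ε * ((1/2) * ut * utn ε)
      + Dvol * gn1 * un1
      = -((Dvol * ρnm1 / (2 * δt)) * (ut - un) ^ 2) :=
  discrete_kinetic_energy_balance_general δt Dvol ρnm1 ρn hδt hρnm1 hρn un ut un1 gn gn1 Ed Fε utn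
    hdualmass hpred hcorr
end

section
/- Let K be a cell with volume |K| > 0 and finite face set E(K), let δt > 0 and ρ^n_K, ρ^{n+1}_K > 0 satisfy the discrete mass balance (|K|/δt)(ρ^{n+1}_K − ρ^n_K) + Σ_{σ∈E(K)} F_σ = 0, where F_σ ∈ ℝ are the face mass fluxes. Let y^n_K ∈ ℝ and, for each σ ∈ E(K), a face value y_σ ∈ ℝ, a coefficient β_σ ∈ [0,1] and a value y_{M_σ} ∈ ℝ such that y_σ − y^n_K = β_σ (y^n_K − y_{M_σ}) if F_σ ≥ 0 and y_σ − y^n_K = β_σ (y_{M_σ} − y^n_K) if F_σ < 0. Define y^{n+1}_K by ρ^{n+1}_K y^{n+1}_K = ρ^n_K y^n_K − (δt/|K|) Σ_{σ∈E(K)} F_σ y_σ. If the CFL condition (δt/(ρ^{n+1}_K |K|)) Σ_{σ∈E(K)} |F_σ| ≤ 1 holds, then y^{n+1}_K = (1 − Σ_σ λ_σ) y^n_K + Σ_σ λ_σ y_{M_σ}, where λ_σ = (δt/(ρ^{n+1}_K |K|)) β_σ |F_σ| satisfies λ_σ ≥ 0 and Σ_σ λ_σ ≤ 1; in particular y^{n+1}_K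 is a convex combination of y^n_K and the values (y_{M_σ})_{σ∈E(K)}, so min(y^n_K, min_σ y_{M_σ}) ≤ y^{n+1}_K ≤ max(y^n_K, max_σ y_{M_σ}). -/
/-- MUSCL stability lemma: under the limitation property of the face
values and the CFL condition, the updated value is a convex combination of the
begin-of-step cell value and the values at the cells given by the limitation, so it
satisfies a discrete maximum principle. -/
theorem muscl_convex_combination {F : Type*}
    (volK δt : ℝ) (hvolK : 0 < volK) (hδt : 0 < δt)
    (E : Finset F) (flux : F → ℝ)
    (ρn ρn1 : ℝ) (hρn : 0 < ρn) (hρn1 : 0 < ρn1)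
    (hmass : (volK / δt) * (ρn1 - ρn) + ∑ σ ∈ E, flux σ = 0)
    (yn : ℝ) (yσ β yM : F → ℝ)
    (hβ : ∀ σ ∈ E, β σ ∈ Set.Icc (0:ℝ) 1)
    (hlim : ∀ σ ∈ E, (0 ≤ flux σ → yσ σ - yn = β σ * (yn - yM σ))
                   ∧ (flux σ < 0 → yσ σ - yn = β σ * (yM σ - yn)))
    (yn1 : ℝ)
    (hupdate : ρn1 * yn1 = ρn * yn - (δt / volK) * ∑ σ ∈ E, flux σ * yσ σ)
    (hCFL : (δt / (ρn1 * volK)) * ∑ σ ∈ E, |flux σ| ≤ 1) :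
    yn1 = (1 - ∑ σ ∈ E, (δt / (ρn1 * volK)) * β σ * |flux σ|) * yn
        + ∑ σ ∈ E, (δt / (ρn1 * volK)) * β σ * |flux σ| * yM σ
    ∧ (∀ σ ∈ E, 0 ≤ (δt / (ρn1 * volK)) * β σ * |flux σ|)
    ∧ ∑ σ ∈ E, (δt / (ρn1 * volK)) * β σ * |flux σ| ≤ 1
    ∧ (insert yn (E.image yM)).min' (Finset.insert_nonempty _ _) ≤ yn1
    ∧ yn1 ≤ (insert yn (E.image yM)).max' (Finset.insert_nonempty _ _) := by
  have hρ' : ρn1 ≠ 0 := ne_of_gt hρn1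
  have hv' : volK ≠ 0 := ne_of_gt hvolK
  have ht' : δt ≠ 0 := ne_of_gt hδt
  set c : ℝ := δt / (ρn1 * volK) with hc
  have hcpos : 0 < c := div_pos hδt (mul_pos hρn1 hvolK)
  set lam : F → ℝ := fun σ => c * β σ * |flux σ| with hlam
  set T : ℝ := ∑ σ ∈ E, flux σ with hT
  set S : ℝ := ∑ σ ∈ E, |flux σ| * (β σ * (yM σ - yn)) with hS
  -- key pointwise identity
  have key : ∀ σ ∈ E, flux σ * yσ σ = flux σ * yn - |flux σ| * (β σ * (yM σ - yn)) := by
    intro σ hσ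
    rcases le_or_gt 0 (flux σ) with h | h
    · rw [abs_of_nonneg h]
      have h1 := (hlim σ hσ).1 h
      nlinarith [h1]
    · rw [abs_of_neg h]
      have h1 := (hlim σ hσ).2 h
      nlinarith [h1]
  have hsum : ∑ σ ∈ E, flux σ * yσ σ = T * yn - S := by
    rw [hT, hS, Finset.sum_mul, ← Finset.sum_sub_distrib]
    exact Finset.sum_congr rfl key
  have h4 : δt * (volK / δt) = volK := by field_simp
  have hmass' : volK * (ρn1 - ρn) + δt * T = 0 := by
    have h : δt * ((volK / δt) * (ρn1 - ρn) + T) = 0 := by rw [hmass]; ring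
    linear_combination h - (ρn1 - ρn) * h4
  have h5 : volK * (δt / volK) = δt := by field_simp
  have hcc : ρn1 * volK * c = δt := by rw [hc]; field_simp
  have hyn1 : yn1 = yn + c * S := by
    have h3 : volK * (ρn1 * yn1) = volK * (ρn * yn - (δt / volK) * (T * yn - S)) := by
      rw [hupdate, hsum]
    have h2 : ρn1 * volK * yn1 = ρn1 * volK * (yn + c * S) := by
      linear_combination h3 - (T * yn - S) * h5 - yn * hmass' - S * hcc
    have := mul_left_cancel₀ (mul_ne_zero hρ' hv') h2
    linarith [this]
  have hconv : yn1 = (1 - ∑ σ ∈ E, lam σ) * yn + ∑ σ ∈ E, lam σ * yM σ := by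
    rw [hyn1, hS, sub_mul, one_mul, Finset.sum_mul, Finset.mul_sum]
    have h6 : ∑ σ ∈ E, c * (|flux σ| * (β σ * (yM σ - yn)))
        = ∑ σ ∈ E, (lam σ * yM σ - lam σ * yn) :=
      Finset.sum_congr rfl (fun σ _ => by simp only [hlam]; ring)
    rw [h6, Finset.sum_sub_distrib]; ring
  have hlam0 : ∀ σ ∈ E, 0 ≤ lam σ := fun σ hσ =>
    mul_nonneg (mul_nonneg hcpos.le (hβ σ hσ).1) (abs_nonneg _)
  have hS1 : ∑ σ ∈ E, lam σ ≤ 1 := by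
    have h7 : ∑ σ ∈ E, lam σ ≤ ∑ σ ∈ E, c * |flux σ| :=
      Finset.sum_le_sum fun σ hσ => by
        simp only [hlam]
        have hb := (hβ σ hσ).2
        have ha := abs_nonneg (flux σ)
        nlinarith [mul_nonneg (mul_nonneg hcpos.le (sub_nonneg.2 hb)) ha]
    calc ∑ σ ∈ E, lam σ ≤ ∑ σ ∈ E, c * |flux σ| := h7
      _ = c * ∑ σ ∈ E, |flux σ| := (Finset.mul_sum _ _ _).symm
      _ ≤ 1 := hCFL
  have hS0 : 0 ≤ ∑ σ ∈ E, lam σ := Finset.sum_nonneg hlam0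
  refine ⟨hconv, hlam0, hS1, ?_, ?_⟩
  · set m := (insert yn (E.image yM)).min' (Finset.insert_nonempty _ _) with hm
    have hmyn : m ≤ yn := Finset.min'_le _ _ (Finset.mem_insert_self _ _)
    have hmM : ∀ σ ∈ E, m ≤ yM σ := fun σ hσ =>
      Finset.min'_le _ _ (Finset.mem_insert_of_mem (Finset.mem_image_of_mem _ hσ))
    calc m = (1 - ∑ σ ∈ E, lam σ) * m + ∑ σ ∈ E, lam σ * m := by
            rw [← Finset.sum_mul]; ring
      _ ≤ (1 - ∑ σ ∈ E, lam σ) * yn + ∑ σ ∈ E, lam σ * yM σ :=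
            add_le_add (mul_le_mul_of_nonneg_left hmyn (by linarith))
              (Finset.sum_le_sum fun σ hσ =>
                mul_le_mul_of_nonneg_left (hmM σ hσ) (hlam0 σ hσ))
      _ = yn1 := hconv.symm
  · set M := (insert yn (E.image yM)).max' (Finset.insert_nonempty _ _) with hM
    have hMyn : yn ≤ M := Finset.le_max' _ _ (Finset.mem_insert_self _ _)
    have hMM : ∀ σ ∈ E, yM σ ≤ M := fun σ hσ =>
      Finset.le_max' _ _ (Finset.mem_insert_of_mem (Finset.mem_image_of_mem _ hσ))
    calc yn1 = (1 - ∑ σ ∈ E, lam σ) * yn + ∑ σ ∈ E, lam σ * yM σ := hconv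
      _ ≤ (1 - ∑ σ ∈ E, lam σ) * M + ∑ σ ∈ E, lam σ * M :=
            add_le_add (mul_le_mul_of_nonneg_left hMyn (by linarith))
              (Finset.sum_le_sum fun σ hσ =>
                mul_le_mul_of_nonneg_left (hMM σ hσ) (hlam0 σ hσ))
      _ = M := by rw [← Finset.sum_mul]; ring
end

section
/- Let y_+, y, y_− ∈ ℝ with y_+ ≤ y ≤ y_− and y_+ < y_−, and let ν ∈ (0,1]. Set ξ = (y_+ − y)/(y_+ − y_−) and ȳ = y_− − (1/ν)(y_− − y). Then: (a) ξ ∈ [0,1]; (b) ν ≤ 1 − ξ if and only if ȳ ≤ y_+; (c) the Lagrange-projection flux value y_σ, defined as y_σ = y_+ if ν ≤ 1 − ξ and y_σ = ȳ otherwise, satisfies y_σ = max(y_+, ȳ); (d) the lower endpoint of the interval I_σ = [ y + ((1−ν)/ν)(y − y_−) , y ] equals ȳ, so that y_σ coincides with the orthogonal projection of the downwind value y_+ onto I_σ. Hence the Lagrange-projection scheme for the constant-velocity one-dimensional advection equation coincides with the downwind scheme limited by projection onto I_σ. -/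
/-- the Lagrange-projection flux value for the 1D constant-velocity
advection problem (monotone decreasing data `y₊ ≤ y ≤ y₋`, CFL number `ν ∈ (0,1]`)
coincides with the downwind value limited by projection onto the interval
`I_σ = [y + ((1-ν)/ν)(y - y₋), y]`. -/
theorem lagrange_projection_downwind (yp y ym ν : ℝ)
    (h1 : yp ≤ y) (h2 : y ≤ ym) (h3 : yp < ym) (hν : ν ∈ Set.Ioc (0:ℝ) 1) :
    ((yp - y) / (yp - ym)) ∈ Set.Icc (0:ℝ) 1
    ∧ (ν ≤ 1 - (yp - y) / (yp - ym) ↔ ym - (1 / ν) * (ym - y) ≤ yp)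
    ∧ (if ν ≤ 1 - (yp - y) / (yp - ym) then yp else ym - (1 / ν) * (ym - y))
        = max yp (ym - (1 / ν) * (ym - y))
    ∧ y + ((1 - ν) / ν) * (y - ym) = ym - (1 / ν) * (ym - y)
    ∧ (if ν ≤ 1 - (yp - y) / (yp - ym) then yp else ym - (1 / ν) * (ym - y))
        = max (y + ((1 - ν) / ν) * (y - ym)) (min y yp) := by
  obtain ⟨hν0, hν1⟩ := hν
  have hd : yp - ym < 0 := by linarith
  have hd' : yp - ym ≠ 0 := ne_of_lt hd
  have hξ0 : (0:ℝ) ≤ (yp - y) / (yp - ym) := by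
    rw [div_nonneg_iff]; right; constructor <;> linarith
  have hξ1 : (yp - y) / (yp - ym) ≤ 1 := by
    rw [div_le_one_of_neg hd]; linarith
  have hk : (yp - y) / (yp - ym) * (yp - ym) = yp - y := div_mul_cancel₀ _ hd'
  have hinv : ν * (1 / ν) = 1 := mul_one_div_cancel (ne_of_gt hν0)
  have hiff : ν ≤ 1 - (yp - y) / (yp - ym) ↔ ym - (1 / ν) * (ym - y) ≤ yp := by
    constructor
    · intro h
      have h1' : ν * (ym - yp) ≤ ym - y := by nlinarith
      nlinarith [mul_le_mul_of_nonneg_left h1' (le_of_lt (one_div_pos.mpr hν0))]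
    · intro h
      have h1' : ν * (ym - yp) ≤ ym - y := by nlinarith
      have := mul_le_mul_of_nonneg_right h1' (le_of_lt (one_div_pos.mpr (by linarith : (0:ℝ) < ym - yp)))
      rw [mul_one_div, mul_div_assoc, div_self (by linarith : ym - yp ≠ 0), mul_one] at this
      nlinarith
  have heq : y + ((1 - ν) / ν) * (y - ym) = ym - (1 / ν) * (ym - y) := by
    field_simp; ring
  have hmin : min y yp = yp := min_eq_right h1
  refine ⟨⟨hξ0, hξ1⟩, hiff, ?_, heq, ?_⟩
  · by_cases h : ν ≤ 1 - (yp - y) / (yp - ym)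
    · rw [if_pos h, max_eq_left (hiff.mp h)]
    · rw [if_neg h, max_eq_right]
      push_neg at h
      by_contra hc
      exact h.not_ge (hiff.mpr (by linarith [not_le.mp hc]))
  · rw [heq, hmin, max_comm]
    by_cases h : ν ≤ 1 - (yp - y) / (yp - ym)
    · rw [if_pos h, max_eq_left (hiff.mp h)]
    · rw [if_neg h, max_eq_right]
      push_neg at h
      by_contra hc
      exact h.not_ge (hiff.mpr (by linarith [not_le.mp hc]))
end

section
/- Let ν ∈ (0,1], α, α' ∈ [0,1] and y, y_−, y_σ, y_{σ'} ∈ ℝ satisfy y_{σ'} − y = α' (y_− − y) and y_σ − y = α ((1−ν)/ν) (y − y_−). Define y' = y − ν (y_σ − y_{σ'}). Then y' = (1 − λ) y + λ y_−, where λ = α (1−ν) + α' ν ∈ [0,1]; in particular min(y, y_−) ≤ y' ≤ max(y, y_−), i.e. the downwind-limited scheme for the one-dimensional constant-velocity advection equation satisfies a discrete maximum principle under the CFL condition ν ≤ 1. -/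
/-- discrete maximum principle for the downwind-limited scheme for the
1D constant-velocity advection equation under the CFL condition `ν ≤ 1`: the updated
value `y' = y - ν(y_σ - y_σ')` is a convex combination of `y` and `y₋`. -/
theorem downwind_limited_maximum_principle (ν α α' y ym yσ yσ' : ℝ)
    (hν : ν ∈ Set.Ioc (0:ℝ) 1)
    (hα : α ∈ Set.Icc (0:ℝ) 1) (hα' : α' ∈ Set.Icc (0:ℝ) 1)
    (h1 : yσ' - y = α' * (ym - y))
    (h2 : yσ - y = α * ((1 - ν) / ν) * (y - ym)) :
    y - ν * (yσ - yσ') = (1 - (α * (1 - ν) + α' * ν)) * y + (α * (1 - ν) + α' * ν) * ym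
    ∧ (α * (1 - ν) + α' * ν) ∈ Set.Icc (0:ℝ) 1
    ∧ min y ym ≤ y - ν * (yσ - yσ')
    ∧ y - ν * (yσ - yσ') ≤ max y ym := by
  obtain ⟨hν0, hν1⟩ := hν
  obtain ⟨hα0, hα1⟩ := hα
  obtain ⟨hα'0, hα'1⟩ := hα'
  have hνne : ν ≠ 0 := ne_of_gt hν0
  have heq : y - ν * (yσ - yσ') =
      (1 - (α * (1 - ν) + α' * ν)) * y + (α * (1 - ν) + α' * ν) * ym := by
    have : yσ - yσ' = (yσ - y) - (yσ' - y) := by ring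
    rw [this, h1, h2]
    field_simp
    ring
  have hl0 : 0 ≤ α * (1 - ν) + α' * ν := by
    have := mul_nonneg hα0 (by linarith : (0:ℝ) ≤ 1 - ν)
    have := mul_nonneg hα'0 hν0.le
    linarith
  have hl1 : α * (1 - ν) + α' * ν ≤ 1 := by
    have h1' : α * (1 - ν) ≤ 1 - ν :=
      mul_le_of_le_one_left (by linarith) hα1
    have h2' : α' * ν ≤ ν := mul_le_of_le_one_left hν0.le hα'1
    linarith
  refine ⟨heq, ⟨hl0, hl1⟩, ?_, ?_⟩ <;> rw [heq]
  · rcases le_total y ym with h | h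
    · rw [min_eq_left h]; nlinarith
    · rw [min_eq_right h]; nlinarith
  · rcases le_total y ym with h | h
    · rw [max_eq_right h]; nlinarith
    · rw [max_eq_left h]; nlinarith
end

section
/- Let ν ∈ (0,1], θ ∈ [0,1], j₀ ∈ ℤ, and let y : ℤ → ℝ be the one-cell-transition step profile y_j = 1 for j < j₀, y_{j₀} = θ, y_j = 0 for j > j₀. For each j ∈ ℤ define the face value y_{j+1/2} as the orthogonal projection of the downwind value y_{j+1} onto the interval with endpoints y_j + ((1−ν)/ν)(y_j − y_{j−1}) and y_j (for ν = 1 this interval reduces to {y_j}), and define the updated values y'_j = y_j − ν (y_{j+1/2} − y_{j−1/2}). Then: if θ + ν ≤ 1, one has y'_j = 1 for j < j₀, y'_{j₀} = θ + ν and y'_j = 0 for j > j₀; if θ + ν > 1, one has y'_j = 1 for j ≤ j₀, y'_{j₀+1} = θ + ν − 1 and y'_j = 0 for j > j₀ + 1. In particular the downwind-limited (Lagrange-projection) scheme transports the step profile exactly: the updated values are the cell averages of the Heaviside profile translated by ν cell widths. -/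
/-- the downwind-limited (Lagrange-projection) scheme transports a
one-cell-transition step profile exactly: on the uniform grid indexed by `ℤ`, with CFL
number `ν ∈ (0,1]`, the update of the profile `(…,1,1,θ,0,0,…)` is again such a
profile, the intermediate value being advanced by `ν` (with a shift of the transition
cell when `θ + ν > 1`). The face value is the projection of the downwind value onto the
interval with endpoints `y_j + ((1-ν)/ν)(y_j - y_{j-1})` and `y_j`. -/
theorem exact_transport_of_step_profile (ν θ : ℝ)
    (hν : ν ∈ Set.Ioc (0:ℝ) 1) (hθ : θ ∈ Set.Icc (0:ℝ) 1)
    (j0 : ℤ) (y : ℤ → ℝ)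
    (hy : ∀ j : ℤ, y j = if j < j0 then 1 else if j = j0 then θ else 0)
    (face : ℤ → ℝ)
    (hface : ∀ j : ℤ, face j =
      max (min (y j + ((1 - ν) / ν) * (y j - y (j - 1))) (y j))
        (min (max (y j + ((1 - ν) / ν) * (y j - y (j - 1))) (y j)) (y (j + 1))))
    (y' : ℤ → ℝ)
    (hy' : ∀ j : ℤ, y' j = y j - ν * (face j - face (j - 1))) :
    (θ + ν ≤ 1 →
      ∀ j : ℤ, y' j = if j < j0 then 1 else if j = j0 then θ + ν else 0)
    ∧ (1 < θ + ν →
      ∀ j : ℤ, y' j = if j ≤ j0 then 1 else if j = j0 + 1 then θ + ν - 1 else 0) := by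
  obtain ⟨hν0, hν1⟩ := hν
  obtain ⟨hθ0, hθ1⟩ := hθ
  have ha : 0 ≤ (1 - ν) / ν := div_nonneg (by linarith) hν0.le
  set a : ℝ := (1 - ν) / ν with ha_def
  have key : θ + a * (θ - 1) = (θ + ν - 1) / ν := by
    rw [ha_def, eq_div_iff hν0.ne', add_mul, div_mul_eq_mul_div, div_mul_eq_mul_div,
      mul_div_assoc, div_self hν0.ne']
    ring
  -- face values for j < j0
  have hf_lt : ∀ j : ℤ, j < j0 → face j = 1 := by
    intro j hj
    rw [hface j, hy j, hy (j - 1), hy (j + 1)]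
    rw [if_pos hj, if_pos (by omega : j - 1 < j0)]
    rcases lt_or_eq_of_le (Int.add_one_le_iff.mpr hj) with hcase | hcase
    · rw [if_pos hcase]
      norm_num
    · rw [if_neg (by omega : ¬ j + 1 < j0), if_pos hcase]
      have h1 : (1:ℝ) + a * (1 - 1) = 1 := by ring
      rw [h1, min_self, max_self]
      exact max_eq_left (min_le_left _ _)
  -- face value at j0
  have hf_eq : face j0 = max ((θ + ν - 1) / ν) 0 := by
    rw [hface j0, hy j0, hy (j0 - 1), hy (j0 + 1)]
    rw [if_neg (lt_irrefl j0), if_pos rfl, if_pos (by omega : j0 - 1 < j0),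
      if_neg (by omega : ¬ j0 + 1 < j0), if_neg (by omega : ¬ j0 + 1 = j0)]
    have hL : θ + a * (θ - 1) ≤ θ := by nlinarith
    rw [min_eq_left hL, max_eq_right hL, min_eq_right hθ0, key]
  -- face values for j > j0
  have hf_gt : ∀ j : ℤ, j0 < j → face j = 0 := by
    intro j hj
    rw [hface j, hy j, hy (j - 1), hy (j + 1)]
    rw [if_neg (by omega : ¬ j < j0), if_neg (by omega : ¬ j = j0),
      if_neg (by omega : ¬ j + 1 < j0), if_neg (by omega : ¬ j + 1 = j0),
      if_neg (by omega : ¬ j - 1 < j0)]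
    by_cases hc : j - 1 = j0
    · rw [if_pos hc]
      have hL : (0:ℝ) + a * (0 - θ) ≤ 0 := by nlinarith
      simp [min_eq_left hL, max_eq_right hL]
    · rw [if_neg hc]
      norm_num
  constructor
  · intro h j
    have hL0 : (θ + ν - 1) / ν ≤ 0 :=
      div_nonpos_of_nonpos_of_nonneg (by linarith) hν0.le
    have hfj0 : face j0 = 0 := by rw [hf_eq]; exact max_eq_right hL0
    rcases lt_trichotomy j j0 with hj | hj | hj
    · rw [if_pos hj, hy' j, hy j, if_pos hj, hf_lt j hj, hf_lt (j - 1) (by omega)]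
      ring
    · rw [if_neg (by omega : ¬ j < j0), if_pos hj, hy' j, hy j,
        if_neg (by omega : ¬ j < j0), if_pos hj, hj, hfj0, hf_lt (j0 - 1) (by omega)]
      ring
    · rw [if_neg (by omega : ¬ j < j0), if_neg (by omega : ¬ j = j0), hy' j, hy j,
        if_neg (by omega : ¬ j < j0), if_neg (by omega : ¬ j = j0), hf_gt j hj]
      by_cases h1 : j - 1 = j0
      · rw [h1, hfj0]; ring
      · rw [hf_gt (j - 1) (by omega)]; ring
  · intro h j
    have hL0 : (0:ℝ) ≤ (θ + ν - 1) / ν := div_nonneg (by linarith) hν0.le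
    have hfj0 : face j0 = (θ + ν - 1) / ν := by rw [hf_eq]; exact max_eq_left hL0
    have hmul : ν * ((θ + ν - 1) / ν) = θ + ν - 1 := by
      rw [mul_div_assoc', mul_comm, mul_div_assoc, div_self hν0.ne', mul_one]
    rcases lt_trichotomy j j0 with hj | hj | hj
    · rw [if_pos hj.le, hy' j, hy j, if_pos hj, hf_lt j hj, hf_lt (j - 1) (by omega)]
      ring
    · rw [if_pos hj.le, hy' j, hy j, if_neg (by omega : ¬ j < j0), if_pos hj, hj,
        hfj0, hf_lt (j0 - 1) (by omega), mul_sub, hmul]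
      ring
    · rw [if_neg (by omega : ¬ j ≤ j0), hy' j, hy j,
        if_neg (by omega : ¬ j < j0), if_neg (by omega : ¬ j = j0), hf_gt j hj]
      by_cases h1 : j = j0 + 1
      · rw [if_pos h1, (by omega : j - 1 = j0), hfj0, mul_sub, hmul]
        ring
      · rw [if_neg h1, hf_gt (j - 1) (by omega)]
        ring
end
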